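/- Let R be a Dedekind domain with fraction field K, A a finite flat commutative R-Hopf algebra, and I_η ⊆ A_K := A ⊗_R K a Hopf ideal. Then I := A ∩ I_η is a Hopf ideal of A; consequently the scheme-theoretic closure of a closed K-subgroup scheme of the generic fiber of a finite flat R-group scheme is a flat closed R-subgroup scheme. -/

import Mathlib

/-!
`A ⧸ I` embeds into the `K`-vector space `A_K ⧸ I_η`, so it is torsion-free and hence flat over
the Dedekind domain `R`. Flatness makes `A ⧸ I ⊗[R] A ⧸ I` embed into
`A_K ⧸ I_η ⊗[R] A_K ⧸ I_η`, which is `A_K ⧸ I_η ⊗[K] A_K ⧸ I_η` because `K` is a localization of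
`R`. The image of `Δ a` for `a ∈ I` vanishes there since `I_η` is a Hopf ideal, so `Δ a` lies in
the kernel of `A ⊗ A → A ⧸ I ⊗ A ⧸ I`, which is `I ⊗ A + A ⊗ I` by right exactness. The counit
and antipode conditions restrict directly from `A_K` to `A`.
-/

open TensorProduct

theorem Ideal.exact_subtype_mkₐ (R : Type*) {A : Type*} [CommRing R] [CommRing A] [Algebra R A]
    (I : Ideal A) :
    Function.Exact (I.restrictScalars R).subtype (Ideal.Quotient.mkₐ R I).toLinearMap :=
  fun _ ↦ by simp [Ideal.Quotient.eq_zero_iff_mem]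

theorem Ideal.ker_map_mkₐ_tensor_mkₐ (R : Type*) {A B : Type*} [CommRing R]
    [CommRing A] [Algebra R A] [CommRing B] [Algebra R B] (I : Ideal A) (J : Ideal B) :
    LinearMap.ker (TensorProduct.map (Ideal.Quotient.mkₐ R I).toLinearMap
        (Ideal.Quotient.mkₐ R J).toLinearMap) =
      Submodule.span R {z : A ⊗[R] B | ∃ u ∈ I, ∃ v : B, z = u ⊗ₜ[R] v} ⊔
        Submodule.span R {z : A ⊗[R] B | ∃ v : A, ∃ u ∈ J, z = v ⊗ₜ[R] u} := by
  rw [TensorProduct.map_ker (I.exact_subtype_mkₐ R) (Ideal.Quotient.mkₐ_surjective R I)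
    (J.exact_subtype_mkₐ R) (Ideal.Quotient.mkₐ_surjective R J), sup_comm, LinearMap.lTensor,
    LinearMap.rTensor, TensorProduct.range_map_eq_span_tmul,
    TensorProduct.range_map_eq_span_tmul]
  congr 2 <;> ext z <;> simp [eq_comm]

theorem IsDedekindDomain.flat_of_injective {R K M V : Type*} [CommRing R] [IsDedekindDomain R]
    [Field K] [Algebra R K] [IsFractionRing R K] [AddCommGroup M] [Module R M]
    [AddCommGroup V] [Module K V] [Module R V] [IsScalarTower R K V]
    (f : M →ₗ[R] V) (hf : Function.Injective f) : Module.Flat R M := by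
  have : Module.Flat R V := (Module.flat_iff_of_isLocalization K (nonZeroDivisors R) V).mp
    inferInstance
  have : Module.IsTorsionFree R M := hf.moduleIsTorsionFree f (map_smul f)
  infer_instance

section Closure

variable {R K A B : Type*} [CommRing R] [Field K] [Algebra R K]
  [CommRing A] [Algebra R A] [CommRing B] [Algebra R B]

local notation "ι" => Algebra.TensorProduct.includeRight (R := R) (A := K)

variable (R) in
def Ideal.quotientComapIncludeRight (I : Ideal (K ⊗[R] A)) :
    A ⧸ I.comap (ι).toRingHom →ₐ[R] (K ⊗[R] A) ⧸ I :=
  Ideal.quotientMapₐ I ι le_rfl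

theorem Ideal.quotientComapIncludeRight_injective (I : Ideal (K ⊗[R] A)) :
    Function.Injective (Ideal.quotientComapIncludeRight R I) :=
  Ideal.quotientMap_injective

theorem Ideal.flat_quotient_comap_includeRight [IsDedekindDomain R] [IsFractionRing R K]
    (I : Ideal (K ⊗[R] A)) : Module.Flat R (A ⧸ I.comap (ι).toRingHom) :=
  IsDedekindDomain.flat_of_injective (K := K) (Ideal.quotientComapIncludeRight R I).toLinearMap
    (Ideal.quotientComapIncludeRight_injective I)

theorem moduleTensorEquiv_map_mkₐ_distribBaseChange (S : Submonoid R) [IsLocalization S K]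
    (I : Ideal (K ⊗[R] A)) (J : Ideal (K ⊗[R] B)) (t : A ⊗[R] B) :
    IsLocalization.moduleTensorEquiv S K _ _
        (TensorProduct.map (Ideal.Quotient.mkₐ K I).toLinearMap
          (Ideal.Quotient.mkₐ K J).toLinearMap
          (AlgebraTensorModule.distribBaseChange R K A B (1 ⊗ₜ t))) =
      TensorProduct.map (Ideal.quotientComapIncludeRight R I).toLinearMap
        (Ideal.quotientComapIncludeRight R J).toLinearMap
        (TensorProduct.map (Ideal.Quotient.mkₐ R (I.comap (ι).toRingHom)).toLinearMap
          (Ideal.Quotient.mkₐ R (J.comap (ι).toRingHom)).toLinearMap t) := by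
  induction t using TensorProduct.induction_on with
  | zero => rw [tmul_zero, map_zero, map_zero, LinearEquiv.map_zero, map_zero, map_zero]
  | tmul x y => rfl
  | add x y hx hy =>
    rw [tmul_add, map_add, map_add, LinearEquiv.map_add, hx, hy, map_add, map_add]

theorem map_mkₐ_comap_eq_zero_of_map_mkₐ_eq_zero [IsDedekindDomain R] [IsFractionRing R K]
    (I : Ideal (K ⊗[R] A)) (J : Ideal (K ⊗[R] B)) (t : A ⊗[R] B)
    (ht : TensorProduct.map (Ideal.Quotient.mkₐ K I).toLinearMap
        (Ideal.Quotient.mkₐ K J).toLinearMap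
        (AlgebraTensorModule.distribBaseChange R K A B (1 ⊗ₜ t)) = 0) :
    TensorProduct.map (Ideal.Quotient.mkₐ R (I.comap (ι).toRingHom)).toLinearMap
      (Ideal.Quotient.mkₐ R (J.comap (ι).toRingHom)).toLinearMap t = 0 := by
  have := I.flat_quotient_comap_includeRight
  have : Module.Flat R ((K ⊗[R] B) ⧸ J) :=
    (Module.flat_iff_of_isLocalization K (nonZeroDivisors R) _).mp inferInstance
  apply TensorProduct.map_injective_of_flat_flat'
    (Ideal.quotientComapIncludeRight R I).toLinearMap
    (Ideal.quotientComapIncludeRight R J).toLinearMap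
    (Ideal.quotientComapIncludeRight_injective I) (Ideal.quotientComapIncludeRight_injective J)
  rw [← moduleTensorEquiv_map_mkₐ_distribBaseChange (nonZeroDivisors R), ht,
    LinearEquiv.map_zero, map_zero]

end Closure

theorem closure_of_hopf_ideal_is_hopf_ideal_general
    (R K A : Type*) [CommRing R] [IsDedekindDomain R]
    [Field K] [Algebra R K] [IsFractionRing R K]
    [CommRing A] [HopfAlgebra R A]
    (Iη : Ideal (K ⊗[R] A))
    -- `Δ(I_η) ⊆ I_η ⊗ A_K + A_K ⊗ I_η`:
    (hcomul : ∀ x ∈ Iη,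
      (TensorProduct.AlgebraTensorModule.distribBaseChange (R := R) (A := K)
            (N := A) (Q := A)).toLinearMap
          (LinearMap.baseChange K (Coalgebra.comul (R := R) (A := A)) x) ∈
        Submodule.span K {z : (K ⊗[R] A) ⊗[K] (K ⊗[R] A) |
            ∃ u ∈ Iη, ∃ v : K ⊗[R] A, z = u ⊗ₜ[K] v} ⊔
        Submodule.span K {z : (K ⊗[R] A) ⊗[K] (K ⊗[R] A) |
            ∃ v : K ⊗[R] A, ∃ u ∈ Iη, z = v ⊗ₜ[K] u})
    -- `ε(I_η) = 0`:
    (hcounit : ∀ x ∈ Iη,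
      LinearMap.baseChange K (Coalgebra.counit (R := R) (A := A)) x = 0)
    -- `S(I_η) ⊆ I_η`:
    (hantipode : ∀ x ∈ Iη,
      LinearMap.baseChange K (HopfAlgebra.antipode (R := R) (A := A)) x ∈ Iη) :
    -- conclusion: `I = A ∩ I_η` is a Hopf ideal of `A`, with `R`-flat quotient:
    (∀ a ∈ Iη.comap (Algebra.TensorProduct.includeRight (R := R) (A := K) (B := A)).toRingHom,
      Coalgebra.comul (R := R) (A := A) a ∈
        Submodule.span R {z : A ⊗[R] A |
            ∃ u ∈ Iη.comap
                (Algebra.TensorProduct.includeRight (R := R) (A := K) (B := A)).toRingHom,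
              ∃ v : A, z = u ⊗ₜ[R] v} ⊔
        Submodule.span R {z : A ⊗[R] A |
            ∃ v : A, ∃ u ∈ Iη.comap
                (Algebra.TensorProduct.includeRight (R := R) (A := K) (B := A)).toRingHom,
              z = v ⊗ₜ[R] u}) ∧
    (∀ a ∈ Iη.comap (Algebra.TensorProduct.includeRight (R := R) (A := K) (B := A)).toRingHom,
      Coalgebra.counit (R := R) (A := A) a = 0) ∧
    (∀ a ∈ Iη.comap (Algebra.TensorProduct.includeRight (R := R) (A := K) (B := A)).toRingHom,
      HopfAlgebra.antipode (R := R) (A := A) a ∈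
        Iη.comap (Algebra.TensorProduct.includeRight (R := R) (A := K) (B := A)).toRingHom) ∧
    Module.Flat R
      (A ⧸ Iη.comap
        (Algebra.TensorProduct.includeRight (R := R) (A := K) (B := A)).toRingHom) := by
  refine ⟨fun a ha ↦ ?_, fun a ha ↦ ?_, fun a ha ↦ ?_, ?_⟩
  · rw [← Ideal.ker_map_mkₐ_tensor_mkₐ, LinearMap.mem_ker]
    apply map_mkₐ_comap_eq_zero_of_map_mkₐ_eq_zero
    rw [← LinearMap.mem_ker, Ideal.ker_map_mkₐ_tensor_mkₐ, ← LinearMap.baseChange_tmul]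
    exact hcomul _ ha
  · have h : LinearMap.baseChange K Coalgebra.counit ((1 : K) ⊗ₜ[R] a) = 0 := hcounit _ ha
    rw [LinearMap.baseChange_tmul] at h
    simpa using congrArg (TensorProduct.rid R K) h
  · simpa using hantipode _ ha
  · exact Iη.flat_quotient_comap_includeRight

/-- Let `R` be a Dedekind domain with fraction field `K`, `A` a finite flat
commutative `R`-Hopf algebra, and `I_η ⊆ A_K := K ⊗[R] A` a Hopf ideal (stable under the
base-changed comultiplication, with zero counit and stable under the antipode).  Then
`I := A ∩ I_η` (the preimage of `I_η` under `A → K ⊗[R] A`) is a Hopf ideal of `A`, and the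
quotient `A ⧸ I` is `R`-flat; consequently the scheme-theoretic closure of a closed
`K`-subgroup scheme of the generic fiber of a finite flat `R`-group scheme is a flat closed
`R`-subgroup scheme. -/
theorem closure_of_hopf_ideal_is_hopf_ideal
    (R K A : Type*) [CommRing R] [IsDomain R] [IsDedekindDomain R]
    [Field K] [Algebra R K] [IsFractionRing R K]
    [CommRing A] [HopfAlgebra R A] [Module.Finite R A] [Module.Flat R A]
    (Iη : Ideal (K ⊗[R] A))
    -- `Δ(I_η) ⊆ I_η ⊗ A_K + A_K ⊗ I_η`:
    (hcomul : ∀ x ∈ Iη,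
      (TensorProduct.AlgebraTensorModule.distribBaseChange (R := R) (A := K)
            (N := A) (Q := A)).toLinearMap
          (LinearMap.baseChange K (Coalgebra.comul (R := R) (A := A)) x) ∈
        Submodule.span K {z : (K ⊗[R] A) ⊗[K] (K ⊗[R] A) |
            ∃ u ∈ Iη, ∃ v : K ⊗[R] A, z = u ⊗ₜ[K] v} ⊔
        Submodule.span K {z : (K ⊗[R] A) ⊗[K] (K ⊗[R] A) |
            ∃ v : K ⊗[R] A, ∃ u ∈ Iη, z = v ⊗ₜ[K] u})
    -- `ε(I_η) = 0`:
    (hcounit : ∀ x ∈ Iη,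
      LinearMap.baseChange K (Coalgebra.counit (R := R) (A := A)) x = 0)
    -- `S(I_η) ⊆ I_η`:
    (hantipode : ∀ x ∈ Iη,
      LinearMap.baseChange K (HopfAlgebra.antipode (R := R) (A := A)) x ∈ Iη) :
    -- conclusion: `I = A ∩ I_η` is a Hopf ideal of `A`, with `R`-flat quotient:
    (∀ a ∈ Iη.comap (Algebra.TensorProduct.includeRight (R := R) (A := K) (B := A)).toRingHom,
      Coalgebra.comul (R := R) (A := A) a ∈
        Submodule.span R {z : A ⊗[R] A |
            ∃ u ∈ Iη.comap
                (Algebra.TensorProduct.includeRight (R := R) (A := K) (B := A)).toRingHom,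
              ∃ v : A, z = u ⊗ₜ[R] v} ⊔
        Submodule.span R {z : A ⊗[R] A |
            ∃ v : A, ∃ u ∈ Iη.comap
                (Algebra.TensorProduct.includeRight (R := R) (A := K) (B := A)).toRingHom,
              z = v ⊗ₜ[R] u}) ∧
    (∀ a ∈ Iη.comap (Algebra.TensorProduct.includeRight (R := R) (A := K) (B := A)).toRingHom,
      Coalgebra.counit (R := R) (A := A) a = 0) ∧
    (∀ a ∈ Iη.comap (Algebra.TensorProduct.includeRight (R := R) (A := K) (B := A)).toRingHom,
      HopfAlgebra.antipode (R := R) (A := A) a ∈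
        Iη.comap (Algebra.TensorProduct.includeRight (R := R) (A := K) (B := A)).toRingHom) ∧
    Module.Flat R
      (A ⧸ Iη.comap
        (Algebra.TensorProduct.includeRight (R := R) (A := K) (B := A)).toRingHom) :=
  closure_of_hopf_ideal_is_hopf_ideal_general R K A Iη hcomul hcounit hantipode
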